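/- arXiv:1811.11966 — 4 statements merged into one kernel-verified Lean document; each statement's English description precedes it below -/
import Mathlib

section
/- Let G be a group and (𝒳,ρ) a categorified G-set. Let 𝒳₀ ⋊ G be the translation category of the G-action on the objects of 𝒳 (objects: objects of 𝒳; for each object x and g ∈ G a morphism (x,g) : ρ_g(x) → x, with composition (x,g) ∘ (ρ_g(x),h) = (x,g*h) read in the appropriate order and identities (x,1)), and let 𝒳₁ ⋊ G be the translation category of the G-action f ↦ ρ_g(f) on the morphisms of 𝒳. Then: (i) the assignments S, T : 𝒳₁ ⋊ G → 𝒳₀ ⋊ G sending a morphism f of 𝒳 to its source (respectively, target) and a translation arrow (f,g) to (source of f, g) (respectively, (target of f, g)) are functors; (ii) the assignment I : 𝒳₀ ⋊ G → 𝒳₁ ⋊ G sending x to id_x and (x,g) to (id_x, g) is a functor; (iii) composition in 𝒳 induces a functor M from the pullback category of S along T to 𝒳₁ ⋊ G, sending a composable pair (h,f) to h ∘ f and a pair of translation arrows ((h,g),(f,g)) to (h ∘ f, g); and (iv) these data satisfy S ∘ I = 𝟭 = T ∘ I, T ∘ M = T ∘ (first projection), S ∘ M = S ∘ (second projection), the associativity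 law M ∘ (M × Id) = M ∘ (Id × M) and the unit laws, so that (𝒳₀ ⋊ G, 𝒳₁ ⋊ G, S, T, I, M) is an internal category in the category Cat of small categories (a double category), called the right translation double category 𝒳 ⋊ G. -/
/-!
Common framework: a *categorified `G`-set* is a (small) category `C` equipped with a right
`G`-action by endofunctors, i.e. functors `ρ g : C ⥤ C` with `ρ 1 = 𝟭 C` and
`ρ (g * h) = ρ g ⋙ ρ h`.  Equivariant functors, equivariant natural transformations and
weak equivalences are as in the paper.
-/

open CategoryTheory

universe w v u v₁ v₂ v₃ v₄ u₁ u₂ u₃ u₄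

/-- A right action of a group `G` on a category `C` by endofunctors: the data making the
category `C` into a *categorified `G`-set*. -/
structure CatAction (G : Type w) [Group G] (C : Type u) [Category.{v} C] where
  ρ : G → C ⥤ C
  map_one : ρ 1 = 𝟭 C
  map_mul : ∀ g h : G, ρ (g * h) = ρ g ⋙ ρ h

variable {G : Type w} [Group G]

/-- Equivariance of a functor between categorified `G`-sets. -/
def IsEquivF {C : Type u₁} {D : Type u₂} [Category.{v₁} C] [Category.{v₂} D]
    (ρ : CatAction G C) (σ : CatAction G D) (F : C ⥤ D) : Prop :=
  ∀ g : G, ρ.ρ g ⋙ F = F ⋙ σ.ρ g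

theorem IsEquivF.id {C : Type u₁} [Category.{v₁} C] (ρ : CatAction G C) :
    IsEquivF ρ ρ (𝟭 C) := fun _ => rfl

theorem IsEquivF.comp {C : Type u₁} {D : Type u₂} {E : Type u₃}
    [Category.{v₁} C] [Category.{v₂} D] [Category.{v₃} E]
    {ρ : CatAction G C} {σ : CatAction G D} {τ : CatAction G E}
    {F : C ⥤ D} {P : D ⥤ E} (hF : IsEquivF ρ σ F) (hP : IsEquivF σ τ P) :
    IsEquivF ρ τ (F ⋙ P) := fun g => by
  rw [← Functor.assoc, hF g, Functor.assoc, hP g, ← Functor.assoc]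

/-- Equivariance of a natural transformation between equivariant functors: at every object
`x` the component at `ρ g x` coincides (through the canonical identifications) with `σ g`
applied to the component at `x`. -/
def IsEquivNT {C : Type u₁} {D : Type u₂} [Category.{v₁} C] [Category.{v₂} D]
    (ρ : CatAction G C) (σ : CatAction G D) {F F' : C ⥤ D}
    (hF : IsEquivF ρ σ F) (hF' : IsEquivF ρ σ F') (α : F ⟶ F') : Prop :=
  ∀ (g : G) (x : C),
    α.app ((ρ.ρ g).obj x) =
      eqToHom (Functor.congr_obj (hF g) x) ≫ (σ.ρ g).map (α.app x) ≫
        eqToHom (Functor.congr_obj (hF' g) x).symm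

/-- Weak equivalence of categorified `G`-sets: a pair of equivariant functors, quasi-inverse
to each other through equivariant natural isomorphisms. -/
def WeakEquivCat {C : Type u₁} {D : Type u₂} [Category.{v₁} C] [Category.{v₂} D]
    (ρ : CatAction G C) (σ : CatAction G D) : Prop :=
  ∃ (F : C ⥤ D) (P : D ⥤ C) (hF : IsEquivF ρ σ F) (hP : IsEquivF σ ρ P)
    (η : F ⋙ P ≅ 𝟭 C) (ε : P ⋙ F ≅ 𝟭 D),
    IsEquivNT ρ ρ (hF.comp hP) (IsEquivF.id ρ) η.hom ∧
    IsEquivNT σ σ (hP.comp hF) (IsEquivF.id σ) ε.hom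
section RightActions

/-- A right action of the group `G` on a type `X`: a right `G`-set. -/
structure RightAction (G : Type w) [Group G] (X : Type u) where
  act : X → G → X
  act_one : ∀ x, act x 1 = x
  act_mul : ∀ (x : X) (g h : G), act x (g * h) = act (act x g) h

/-- Equivariant maps of right `G`-sets. -/
def IsEquivMap {X : Type u₁} {Y : Type u₂} (a : RightAction G X) (b : RightAction G Y)
    (φ : X → Y) : Prop :=
  ∀ (x : X) (g : G), φ (a.act x g) = b.act (φ x) g

/-- The discrete categorified `G`-set `I(X)` associated to a right `G`-set `X`. -/
def discAction {X : Type u} (a : RightAction G X) : CatAction G (Discrete X) where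
  ρ g := Discrete.functor fun x => ⟨a.act x g⟩
  map_one := CategoryTheory.Functor.ext
    (fun x => by cases x with | mk x => simp [a.act_one])
    (fun _ _ _ => Subsingleton.elim _ _)
  map_mul g h := CategoryTheory.Functor.ext
    (fun x => by cases x with | mk x => simp [a.act_mul])
    (fun _ _ _ => Subsingleton.elim _ _)

/-- The trivial action of `G` on any category. -/
def trivialCatAction (G : Type w) [Group G] (C : Type u) [Category.{v} C] :
    CatAction G C where
  ρ _ := 𝟭 C
  map_one := rfl
  map_mul _ _ := rfl

end RightActions

section Translation

/-- The (right) translation category `X ⋊ G` of a right `G`-set `X`: objects are the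
elements of `X`, and for each `x : X` and `g : G` there is exactly one morphism
`(x, g) : x·g ⟶ x`. -/
def TransCat {X : Type u} (a : RightAction G X) : Type u := X

instance TransCat.category {X : Type u} (a : RightAction G X) :
    Category.{w} (TransCat a) where
  Hom x y := {g : G // x = a.act y g}
  id x := ⟨1, (a.act_one x).symm⟩
  comp {x y z} f g := ⟨g.1 * f.1,
    f.2.trans ((congrArg (fun w => a.act w f.1) g.2).trans (a.act_mul z g.1 f.1).symm)⟩
  id_comp f := Subtype.ext (mul_one _)
  comp_id f := Subtype.ext (one_mul _)
  assoc f g h := Subtype.ext (mul_assoc _ _ _).symm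

/-- An equivariant map of right `G`-sets induces a functor between the translation
categories. -/
def transMap {X : Type u₁} {Y : Type u₂} {a : RightAction G X} {b : RightAction G Y}
    (u : X → Y) (hu : ∀ (x : X) (g : G), u (a.act x g) = b.act (u x) g) :
    TransCat a ⥤ TransCat b where
  obj x := u x
  map {x y} f := ⟨f.1, (congrArg u f.2).trans (hu y f.1)⟩
  map_id x := Subtype.ext rfl
  map_comp f g := Subtype.ext rfl

variable {C : Type u} [Category.{v} C]

/-- The action of `G` on the objects of a categorified `G`-set. -/
def objAct (ρ : CatAction G C) : RightAction G C where
  act x g := (ρ.ρ g).obj x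
  act_one x := by show (ρ.ρ 1).obj x = x; rw [ρ.map_one]; rfl
  act_mul x g h := by
    show (ρ.ρ (g * h)).obj x = (ρ.ρ h).obj ((ρ.ρ g).obj x)
    rw [ρ.map_mul]; rfl

/-- The total type of morphisms of a category. -/
def MorTot (C : Type u) [Category.{v} C] : Type (max u v) := Σ p : C × C, p.1 ⟶ p.2

/-- The action of `G` on the (total type of) morphisms of a categorified `G`-set. -/
def morAct (ρ : CatAction G C) : RightAction G (MorTot C) where
  act m g := ⟨((ρ.ρ g).obj m.1.1, (ρ.ρ g).obj m.1.2), (ρ.ρ g).map m.2⟩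
  act_one m := by
    show (⟨((ρ.ρ 1).obj m.1.1, (ρ.ρ 1).obj m.1.2), (ρ.ρ 1).map m.2⟩ : MorTot C) = m
    rw [ρ.map_one]; rfl
  act_mul m g h := by
    show (⟨((ρ.ρ (g * h)).obj m.1.1, (ρ.ρ (g * h)).obj m.1.2), (ρ.ρ (g * h)).map m.2⟩ :
        MorTot C) = _
    rw [ρ.map_mul]; rfl

/-- Composable pairs of morphisms (the objects of the strict pullback of the source functor
along the target functor). -/
structure CompPair (C : Type u) [Category.{v} C] where
  {x y z : C}
  f : x ⟶ y
  h : y ⟶ z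

/-- The action of `G` on composable pairs. -/
def compAct (ρ : CatAction G C) : RightAction G (CompPair C) where
  act p g := ⟨(ρ.ρ g).map p.f, (ρ.ρ g).map p.h⟩
  act_one p := by
    show (⟨(ρ.ρ 1).map p.f, (ρ.ρ 1).map p.h⟩ : CompPair C) = p
    rw [ρ.map_one]; rfl
  act_mul p g h := by
    show (⟨(ρ.ρ (g * h)).map p.f, (ρ.ρ (g * h)).map p.h⟩ : CompPair C) = _
    rw [ρ.map_mul]; rfl

/-- Composable triples of morphisms. -/
structure TripleComp (C : Type u) [Category.{v} C] where
  {x y z w : C}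
  f : x ⟶ y
  g : y ⟶ z
  h : z ⟶ w

/-- The action of `G` on composable triples. -/
def tripleAct (ρ : CatAction G C) : RightAction G (TripleComp C) where
  act t k := ⟨(ρ.ρ k).map t.f, (ρ.ρ k).map t.g, (ρ.ρ k).map t.h⟩
  act_one t := by
    show (⟨(ρ.ρ 1).map t.f, (ρ.ρ 1).map t.g, (ρ.ρ 1).map t.h⟩ : TripleComp C) = t
    rw [ρ.map_one]; rfl
  act_mul t g h := by
    show (⟨(ρ.ρ (g * h)).map t.f, (ρ.ρ (g * h)).map t.g, (ρ.ρ (g * h)).map t.h⟩ :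
        TripleComp C) = _
    rw [ρ.map_mul]; rfl

variable (ρ : CatAction G C)

/-- The source functor `S : 𝒳₁ ⋊ G ⥤ 𝒳₀ ⋊ G`. -/
def Sfun : TransCat (morAct ρ) ⥤ TransCat (objAct ρ) :=
  transMap (fun m => m.1.1) (fun _ _ => rfl)

/-- The target functor `T : 𝒳₁ ⋊ G ⥤ 𝒳₀ ⋊ G`. -/
def Tfun : TransCat (morAct ρ) ⥤ TransCat (objAct ρ) :=
  transMap (fun m => m.1.2) (fun _ _ => rfl)

/-- The identity functor `I : 𝒳₀ ⋊ G ⥤ 𝒳₁ ⋊ G`, `x ↦ id_x`. -/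
def Ifun : TransCat (objAct ρ) ⥤ TransCat (morAct ρ) :=
  transMap (fun x => (⟨(x, x), 𝟙 x⟩ : MorTot C)) (fun x g => by simp [morAct, objAct]; rfl)

/-- The composition functor `M`, induced by composition in `𝒳`, from the (pullback)
category of composable pairs to `𝒳₁ ⋊ G`. -/
def Mfun : TransCat (compAct ρ) ⥤ TransCat (morAct ρ) :=
  transMap (fun p => (⟨(p.x, p.z), p.f ≫ p.h⟩ : MorTot C))
    (fun p g => by simp [morAct, compAct]; rfl)

/-- First projection from the pullback category: `(h, f) ↦ h`. -/
def pr1 : TransCat (compAct ρ) ⥤ TransCat (morAct ρ) :=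
  transMap (fun p => (⟨(p.y, p.z), p.h⟩ : MorTot C)) (fun _ _ => rfl)

/-- Second projection from the pullback category: `(h, f) ↦ f`. -/
def pr2 : TransCat (compAct ρ) ⥤ TransCat (morAct ρ) :=
  transMap (fun p => (⟨(p.x, p.y), p.f⟩ : MorTot C)) (fun _ _ => rfl)

/-- `M × Id`: composing the first two morphisms of a composable triple. -/
def assocL : TransCat (tripleAct ρ) ⥤ TransCat (compAct ρ) :=
  transMap (fun t => (⟨t.f ≫ t.g, t.h⟩ : CompPair C))
    (fun t g => by simp [tripleAct, compAct])

/-- `Id × M`: composing the last two morphisms of a composable triple. -/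
def assocR : TransCat (tripleAct ρ) ⥤ TransCat (compAct ρ) :=
  transMap (fun t => (⟨t.f, t.g ≫ t.h⟩ : CompPair C))
    (fun t g => by simp [tripleAct, compAct])

/-- Pairing a morphism with the identity of its source. -/
def unitL : TransCat (morAct ρ) ⥤ TransCat (compAct ρ) :=
  transMap (fun m => (⟨𝟙 m.1.1, m.2⟩ : CompPair C))
    (fun m g => by simp [morAct, compAct])

/-- Pairing a morphism with the identity of its target. -/
def unitR : TransCat (morAct ρ) ⥤ TransCat (compAct ρ) :=
  transMap (fun m => (⟨m.2, 𝟙 m.1.2⟩ : CompPair C))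
    (fun m g => by simp [morAct, compAct])

/- A functor between translation categories that keeps the label `g` of every arrow is
determined by its values on objects, and every functor built by `transMap` keeps labels. So each
internal-category law is an identity between maps of objects: definitional where no composite of
morphisms of `C` is compared, and otherwise the associativity or a unit law of `C`. -/

@[simp]
lemma TransCat.comp_val {X : Type u₁} {a : RightAction G X} {x y z : TransCat a}
    (f : x ⟶ y) (g : y ⟶ z) : (f ≫ g).1 = g.1 * f.1 := rfl

@[simp]
lemma TransCat.eqToHom_val {X : Type u₁} {a : RightAction G X} {x y : TransCat a}
    (h : x = y) : (eqToHom h).1 = 1 := by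
  subst h
  rfl

lemma TransCat.functor_ext {X : Type u₁} {Y : Type u₂} {a : RightAction G X}
    {b : RightAction G Y} {F F' : TransCat a ⥤ TransCat b}
    (hobj : ∀ x, F.obj x = F'.obj x)
    (hmap : ∀ (x y : TransCat a) (f : x ⟶ y), (F.map f).1 = (F'.map f).1) :
    F = F' :=
  CategoryTheory.Functor.ext hobj fun x y f => Subtype.ext <| by simp [hmap]

lemma assocL_comp_Mfun : assocL ρ ⋙ Mfun ρ = assocR ρ ⋙ Mfun ρ :=
  TransCat.functor_ext (fun t => congrArg (Sigma.mk _) (Category.assoc t.f t.g t.h))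
    fun _ _ _ => rfl

lemma unitL_comp_Mfun : unitL ρ ⋙ Mfun ρ = 𝟭 (TransCat (morAct ρ)) :=
  TransCat.functor_ext (fun m => congrArg (Sigma.mk m.1) (Category.id_comp m.2))
    fun _ _ _ => rfl

lemma unitR_comp_Mfun : unitR ρ ⋙ Mfun ρ = 𝟭 (TransCat (morAct ρ)) :=
  TransCat.functor_ext (fun m => congrArg (Sigma.mk m.1) (Category.comp_id m.2))
    fun _ _ _ => rfl

/-- For a categorified `G`-set `(𝒳, ρ)`, the source, target, identity and
composition assignments between the translation categories `𝒳₁ ⋊ G` and `𝒳₀ ⋊ G` (and the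
pullback category of `S` along `T`, realized as the translation category of the `G`-action
on composable pairs) are functors — witnessed by `Sfun`, `Tfun`, `Ifun`, `Mfun` above,
whose values on objects and on translation arrows are the prescribed ones — and they
satisfy the axioms of an internal category in `Cat`, making
`(𝒳₀ ⋊ G, 𝒳₁ ⋊ G, S, T, I, M)` a double category: the right translation double category
`𝒳 ⋊ G`. -/
theorem translation_double_category :
    -- values of the functors on objects
    (∀ m : MorTot C, (Sfun ρ).obj m = m.1.1) ∧
    (∀ m : MorTot C, (Tfun ρ).obj m = m.1.2) ∧
    (∀ x : C, (Ifun ρ).obj x = (⟨(x, x), 𝟙 x⟩ : MorTot C)) ∧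
    (∀ p : CompPair C, (Mfun ρ).obj p = (⟨(p.x, p.z), p.f ≫ p.h⟩ : MorTot C)) ∧
    -- the functors send a translation arrow labelled by `g ∈ G` to the translation arrow
    -- labelled by the same `g`
    (∀ (m m' : TransCat (morAct ρ)) (φ : m ⟶ m'), ((Sfun ρ).map φ).1 = φ.1) ∧
    (∀ (m m' : TransCat (morAct ρ)) (φ : m ⟶ m'), ((Tfun ρ).map φ).1 = φ.1) ∧
    (∀ (x x' : TransCat (objAct ρ)) (φ : x ⟶ x'), ((Ifun ρ).map φ).1 = φ.1) ∧
    (∀ (p p' : TransCat (compAct ρ)) (φ : p ⟶ p'), ((Mfun ρ).map φ).1 = φ.1) ∧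
    -- the internal-category axioms in `Cat`
    (Ifun ρ ⋙ Sfun ρ = 𝟭 (TransCat (objAct ρ))) ∧
    (Ifun ρ ⋙ Tfun ρ = 𝟭 (TransCat (objAct ρ))) ∧
    (pr1 ρ ⋙ Sfun ρ = pr2 ρ ⋙ Tfun ρ) ∧
    (Mfun ρ ⋙ Tfun ρ = pr1 ρ ⋙ Tfun ρ) ∧
    (Mfun ρ ⋙ Sfun ρ = pr2 ρ ⋙ Sfun ρ) ∧
    (assocL ρ ⋙ Mfun ρ = assocR ρ ⋙ Mfun ρ) ∧
    (unitL ρ ⋙ Mfun ρ = 𝟭 (TransCat (morAct ρ))) ∧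
    (unitR ρ ⋙ Mfun ρ = 𝟭 (TransCat (morAct ρ))) :=
  ⟨fun _ => rfl, fun _ => rfl, fun _ => rfl, fun _ => rfl,
    fun _ _ _ => rfl, fun _ _ _ => rfl, fun _ _ _ => rfl, fun _ _ _ => rfl,
    rfl, rfl, rfl, rfl, rfl, assocL_comp_Mfun ρ, unitL_comp_Mfun ρ, unitR_comp_Mfun ρ⟩

end Translation
end

section
/- Let G be a group, (𝒳,ρ) a categorified G-set, and R a set of representatives of the objects of 𝒳 for the equivalence relation ⊡*. Then 𝒳 is the disjoint union of the orbit categories Sq(a) for a ∈ R: every object of 𝒳 lies in exactly one Sq(a); every morphism of 𝒳 has its source and target in the same Sq(a); and each Sq(a) is a categorified G-subset of 𝒳 (its object and morphism sets are stable under every ρ_g). Moreover, for each a ∈ R there do not exist two nonempty categorified G-subsets 𝒴 and 𝒴' with Sq(a) = 𝒴 ⊎ 𝒴'. -/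
/-!
Common framework: a *categorified `G`-set* is a (small) category `C` equipped with a right
`G`-action by endofunctors, i.e. functors `ρ g : C ⥤ C` with `ρ 1 = 𝟭 C` and
`ρ (g * h) = ρ g ⋙ ρ h`.  Equivariant functors, equivariant natural transformations and
weak equivalences are as in the paper.
-/

open CategoryTheory

universe w v u v₁ v₂ v₃ v₄ u₁ u₂ u₃ u₄

variable {G : Type w} [Group G]

section Squares

variable {C : Type u} [Category.{v} C]

/-- The relation `a ⊡ b` on objects of a categorified `G`-set: `a` and `b` are both
vertices of some square of the translation double category, i.e. there are a morphism
`f : x ⟶ y` of `𝒳` and `g ∈ G` with `a, b ∈ {x, y, ρ_g x, ρ_g y}`. -/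
def sqRel (ρ : CatAction G C) (a b : C) : Prop :=
  ∃ (x y : C) (_ : x ⟶ y) (g : G),
    (a = x ∨ a = y ∨ a = (ρ.ρ g).obj x ∨ a = (ρ.ρ g).obj y) ∧
    (b = x ∨ b = y ∨ b = (ρ.ρ g).obj x ∨ b = (ρ.ρ g).obj y)

/-- `⊡*`: the equivalence relation generated by `⊡`. -/
def sqStar (ρ : CatAction G C) : C → C → Prop :=
  Relation.EqvGen (sqRel ρ)

end Squares

/-!
Every morphism `x ⟶ y` and every pair `x, ρ_g x` is a `⊡`-pair, which gives the closure
properties of the classes. Conversely, a predicate respected by morphisms and preserved by every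
`ρ_g` is also reflected by every `ρ_g` (apply `ρ_{g⁻¹}`), so it respects `⊡` and is therefore
constant on each `⊡*`-class: a class cannot split into two nonempty `G`-subsets.
-/

namespace CatAction

variable {C : Type u} [Category.{v} C] (ρ : CatAction G C)

theorem obj_inv_obj (g : G) (x : C) : (ρ.ρ g⁻¹).obj ((ρ.ρ g).obj x) = x :=
  Functor.congr_obj (by rw [← ρ.map_mul, mul_inv_cancel, ρ.map_one] : ρ.ρ g ⋙ ρ.ρ g⁻¹ = 𝟭 C) x

variable {ρ}

theorem iff_obj_of_forall_obj {P : C → Prop} (hP : ∀ (g : G) (x : C), P x → P ((ρ.ρ g).obj x))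
    (g : G) (x : C) : P x ↔ P ((ρ.ρ g).obj x) :=
  ⟨hP g x, fun h => ρ.obj_inv_obj g x ▸ hP g⁻¹ _ h⟩

end CatAction

section Squares

variable {C : Type u} [Category.{v} C] {ρ : CatAction G C}

theorem sqRel_of_hom {x y : C} (f : x ⟶ y) : sqRel ρ x y :=
  ⟨x, y, f, 1, Or.inl rfl, Or.inr (Or.inl rfl)⟩

theorem sqRel_obj (g : G) (x : C) : sqRel ρ x ((ρ.ρ g).obj x) :=
  ⟨x, x, 𝟙 x, g, Or.inl rfl, Or.inr (Or.inr (Or.inl rfl))⟩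

theorem sqStar_trans {a b c : C} (hab : sqStar ρ a b) (hbc : sqStar ρ b c) : sqStar ρ a c :=
  Relation.EqvGen.trans _ _ _ hab hbc

theorem sqStar_symm {a b : C} (h : sqStar ρ a b) : sqStar ρ b a :=
  Relation.EqvGen.symm _ _ h

theorem sqStar_iff_of_hom {x y : C} (f : x ⟶ y) (a : C) : sqStar ρ a x ↔ sqStar ρ a y :=
  have hxy : sqStar ρ x y := Relation.EqvGen.rel _ _ (sqRel_of_hom f)
  ⟨fun h => sqStar_trans h hxy, fun h => sqStar_trans h (sqStar_symm hxy)⟩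

theorem sqStar_obj {a x : C} (g : G) (h : sqStar ρ a x) : sqStar ρ a ((ρ.ρ g).obj x) :=
  sqStar_trans h (Relation.EqvGen.rel _ _ (sqRel_obj g x))

theorem iff_of_sqRel {P : C → Prop} (hPG : ∀ (g : G) (x : C), P x → P ((ρ.ρ g).obj x))
    (hPM : ∀ {x y : C}, (x ⟶ y) → (P x ↔ P y)) {a b : C} (h : sqRel ρ a b) : P a ↔ P b := by
  obtain ⟨x, y, f, g, ha, hb⟩ := h
  have hx : ∀ z, (z = x ∨ z = y ∨ z = (ρ.ρ g).obj x ∨ z = (ρ.ρ g).obj y) → (P z ↔ P x) := by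
    rintro z (hz | hz | hz | hz) <;> rw [hz]
    · exact (hPM f).symm
    · exact (CatAction.iff_obj_of_forall_obj hPG g x).symm
    · exact (CatAction.iff_obj_of_forall_obj hPG g y).symm.trans (hPM f).symm
  exact (hx a ha).trans (hx b hb).symm

theorem iff_of_sqStar {P : C → Prop} (hPG : ∀ (g : G) (x : C), P x → P ((ρ.ρ g).obj x))
    (hPM : ∀ {x y : C}, (x ⟶ y) → (P x ↔ P y)) {a b : C} (h : sqStar ρ a b) : P a ↔ P b :=
  have hiff : Equivalence fun x y : C => P x ↔ P y := ⟨fun _ => Iff.rfl, Iff.symm, Iff.trans⟩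
  hiff.eqvGen_iff.mp (Relation.EqvGen.mono (fun _ _ => iff_of_sqRel hPG hPM) _ _ h)

end Squares

/-- Let `R` be a set of representatives of the objects of a categorified
`G`-set `𝒳` for the equivalence relation `⊡*`.  Then `𝒳` is the disjoint union of the
orbit categories `Sq(a)`, `a ∈ R`: every object lies in exactly one class, every morphism
has its source and target in the same class, each class is stable under the action of `G`
(so each `Sq(a)` is a categorified `G`-subset); moreover no `Sq(a)` admits a decomposition
into two nonempty categorified `G`-subsets. -/
theorem orbit_decomposition {G : Type w} [Group G]
    {C : Type u} [Category.{v} C] (ρ : CatAction G C) (R : Set C)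
    (hR : ∀ x : C, ∃! a, a ∈ R ∧ sqStar ρ a x) :
    (∀ x : C, ∃! a, a ∈ R ∧ sqStar ρ a x) ∧
    (∀ {x y : C}, (x ⟶ y) → ∀ a : C, (sqStar ρ a x ↔ sqStar ρ a y)) ∧
    (∀ (a x : C) (g : G), sqStar ρ a x → sqStar ρ a ((ρ.ρ g).obj x)) ∧
    (∀ a ∈ R, ¬ ∃ P Q : C → Prop,
      (∀ x : C, sqStar ρ a x ↔ (P x ∨ Q x)) ∧
      (∀ x : C, ¬ (P x ∧ Q x)) ∧
      (∃ x : C, P x) ∧ (∃ x : C, Q x) ∧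
      (∀ (g : G) (x : C), P x → P ((ρ.ρ g).obj x)) ∧
      (∀ (g : G) (x : C), Q x → Q ((ρ.ρ g).obj x)) ∧
      (∀ {x y : C}, (x ⟶ y) → (P x ↔ P y))) := by
  refine ⟨hR, sqStar_iff_of_hom, fun a x g => sqStar_obj g, ?_⟩
  rintro a - ⟨P, Q, hclass, hdisj, ⟨p, hp⟩, ⟨q, hq⟩, hPG, -, hPM⟩
  have hpq : sqStar ρ p q :=
    sqStar_trans (sqStar_symm ((hclass p).mpr (Or.inl hp))) ((hclass q).mpr (Or.inr hq))
  exact hdisj q ⟨(iff_of_sqStar hPG hPM hpq).mp hp, hq⟩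
end

section
/- Let G be a group and let X and Y be finite right G-sets. If the discrete categorified G-sets I(X) and I(Y) are weakly equivalent, then X and Y are isomorphic as right G-sets (there is an equivariant bijection X → Y). (This is the injectivity of the comparison homomorphism from the classical Burnside rig of G to the categorified Burnside rig of G.) -/
/-!
Common framework: a *categorified `G`-set* is a (small) category `C` equipped with a right
`G`-action by endofunctors, i.e. functors `ρ g : C ⥤ C` with `ρ 1 = 𝟭 C` and
`ρ (g * h) = ρ g ⋙ ρ h`.  Equivariant functors, equivariant natural transformations and
weak equivalences are as in the paper.
-/

open CategoryTheory

universe w v u v₁ v₂ v₃ v₄ u₁ u₂ u₃ u₄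

variable {G : Type w} [Group G]

theorem isEquivMap_obj_of_isEquivF {X : Type u₁} {Y : Type u₂} {a : RightAction G X}
    {b : RightAction G Y} {F : Discrete X ⥤ Discrete Y}
    (hF : IsEquivF (discAction a) (discAction b) F) :
    IsEquivMap a b (Discrete.as ∘ F.obj ∘ Discrete.mk) :=
  fun x g => congrArg Discrete.as (Functor.congr_obj (hF g) ⟨x⟩)

theorem discrete_weakEquiv_iso_general {G : Type w} [Group G] {X Y : Type u}
    (a : RightAction G X) (b : RightAction G Y)
    (h : WeakEquivCat (discAction a) (discAction b)) :
    ∃ φ : X → Y, Function.Bijective φ ∧ IsEquivMap a b φ := by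
  obtain ⟨F, P, hF, -, η, ε, -, -⟩ := h
  let e : X ≃ Y := Discrete.equivOfEquivalence (CategoryTheory.Equivalence.mk F P η.symm ε)
  exact ⟨e, e.bijective, isEquivMap_obj_of_isEquivF hF⟩

/-- If `X` and `Y` are finite right `G`-sets whose associated discrete
categorified `G`-sets `I(X)` and `I(Y)` are weakly equivalent, then `X ≅ Y` as right
`G`-sets: there is an equivariant bijection `X → Y`. -/
theorem discrete_weakEquiv_iso {G : Type w} [Group G] {X Y : Type u}
    [Finite X] [Finite Y] (a : RightAction G X) (b : RightAction G Y)
    (h : WeakEquivCat (discAction a) (discAction b)) :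
    ∃ φ : X → Y, Function.Bijective φ ∧ IsEquivMap a b φ :=
  discrete_weakEquiv_iso_general a b h
end

section
/- Let G be a group, let X, Y, A, B be finite right G-sets, and let ℰ be a finite categorified G-set. If the categorified G-set I(X) ⊎ I(B) ⊎ ℰ is weakly equivalent to I(A) ⊎ I(Y) ⊎ ℰ, then the right G-sets X ⊎ B and A ⊎ Y are isomorphic. (This is the injectivity of the induced ring homomorphism from the classical Burnside ring of G to the categorified Burnside ring of G.) -/
/-!
Common framework: a *categorified `G`-set* is a (small) category `C` equipped with a right
`G`-action by endofunctors, i.e. functors `ρ g : C ⥤ C` with `ρ 1 = 𝟭 C` and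
`ρ (g * h) = ρ g ⋙ ρ h`.  Equivariant functors, equivariant natural transformations and
weak equivalences are as in the paper.
-/

open CategoryTheory

universe w v u v₁ v₂ v₃ v₄ u₁ u₂ u₃ u₄

variable {G : Type w} [Group G]

section SumPart

variable {C : Type u} {D : Type u} [Category.{v} C] [Category.{v} D]

theorem sum_id_id : (𝟭 C).sum (𝟭 D) = 𝟭 (C ⊕ D) :=
  CategoryTheory.Functor.ext (fun X => by cases X <;> rfl)
    (fun X Y f => by cases X <;> cases Y <;> first | (exact (hom_inl_inr_false _ _ f).elim) | (exact (hom_inr_inl_false _ _ f).elim) | (erw [eqToHom_refl, eqToHom_refl, Category.id_comp, Category.comp_id]; rfl))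

theorem sum_comp_sum {C' D' C'' D'' : Type u}
    [Category.{v} C'] [Category.{v} D'] [Category.{v} C''] [Category.{v} D'']
    (F : C ⥤ C') (F' : C' ⥤ C'') (K : D ⥤ D') (K' : D' ⥤ D'') :
    (F ⋙ F').sum (K ⋙ K') = F.sum K ⋙ F'.sum K' :=
  CategoryTheory.Functor.ext (fun X => by cases X <;> rfl)
    (fun X Y f => by cases X <;> cases Y <;> first | (exact (hom_inl_inr_false _ _ f).elim) | (exact (hom_inr_inl_false _ _ f).elim) | (erw [eqToHom_refl, eqToHom_refl, Category.id_comp, Category.comp_id]; rfl))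

/-- The disjoint union of two categorified `G`-sets, with the componentwise action. -/
def CatAction.sum (ρ : CatAction G C) (τ : CatAction G D) : CatAction G (C ⊕ D) where
  ρ g := (ρ.ρ g).sum (τ.ρ g)
  map_one := by simp only [ρ.map_one, τ.map_one, sum_id_id]
  map_mul g h := by simp only [ρ.map_mul, τ.map_mul, sum_comp_sum]

end SumPart
/-- The disjoint union of two right `G`-sets. -/
def RightAction.sum {X : Type u} {Y : Type u} (a : RightAction G X) (b : RightAction G Y) :
    RightAction G (X ⊕ Y) where
  act p g := match p with
    | .inl x => .inl (a.act x g)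
    | .inr y => .inr (b.act y g)
  act_one p := by cases p <;> simp [a.act_one, b.act_one]
  act_mul p g h := by cases p <;> simp [a.act_mul, b.act_mul]


/-!
A weak equivalence is in particular an equivalence of categories whose functor commutes with the
actions, so it induces an equivariant bijection between the right `G`-sets `π₀` of isomorphism
classes of objects. Taking isomorphism classes turns `I(X)` into `X` and disjoint unions into
disjoint unions, which gives an equivariant bijection `(X ⊕ B) ⊕ π₀ ℰ ≃ (A ⊕ Y) ⊕ π₀ ℰ`. The
finite summand `π₀ ℰ` is then cancelled canonically: starting from `s ∈ X ⊕ B`, apply the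
bijection and keep feeding the result back into it as long as it lands in `π₀ ℰ`. By injectivity
this chain cannot revisit `π₀ ℰ`, so it leaves it within `|π₀ ℰ|` steps; the resulting map
commutes with the action because every step does, and running the chain of the inverse bijection
backwards inverts it.
-/

open Function

namespace Equiv

variable {S T Z : Type*} (e : S ⊕ Z ≃ T ⊕ Z)

def sumCancelStep : T ⊕ Z → T ⊕ Z := Sum.elim Sum.inl (e ∘ Sum.inr)

@[simp]
lemma sumCancelStep_inl (t : T) : e.sumCancelStep (.inl t) = .inl t := rfl

@[simp]
lemma sumCancelStep_inr (z : Z) : e.sumCancelStep (.inr z) = e (.inr z) := rfl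

lemma iterate_sumCancelStep_eq_inl_of_le {p : T ⊕ Z} {t : T} {m n : ℕ}
    (h : e.sumCancelStep^[m] p = .inl t) (hmn : m ≤ n) : e.sumCancelStep^[n] p = .inl t := by
  obtain ⟨k, rfl⟩ := Nat.exists_eq_add_of_le hmn
  rw [add_comm, iterate_add_apply, h, iterate_fixed (e.sumCancelStep_inl t)]

lemma iterate_sumCancelStep_ne_of_lt (s : S) {i j : ℕ} (hij : i < j)
    (hright : ∀ k < j, (e.sumCancelStep^[k] (e (.inl s))).isRight) :
    e.sumCancelStep^[i] (e (.inl s)) ≠ e.sumCancelStep^[j] (e (.inl s)) := by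
  induction i generalizing j with
  | zero =>
    obtain ⟨j, rfl⟩ := Nat.exists_eq_add_one_of_ne_zero hij.ne'
    obtain ⟨z, hz⟩ := Sum.isRight_iff.mp (hright j j.lt_add_one)
    rw [iterate_succ_apply', hz, sumCancelStep_inr, iterate_zero_apply]
    exact e.injective.ne Sum.inl_ne_inr
  | succ i ih =>
    obtain ⟨j, rfl⟩ := Nat.exists_eq_add_one_of_ne_zero (by omega : j ≠ 0)
    obtain ⟨z, hz⟩ := Sum.isRight_iff.mp (hright j j.lt_add_one)
    obtain ⟨z', hz'⟩ := Sum.isRight_iff.mp (hright i (by omega))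
    rw [iterate_succ_apply', iterate_succ_apply', hz, hz', sumCancelStep_inr, sumCancelStep_inr]
    intro h
    exact ih (j := j) (by omega) (fun k hk => hright k (by omega))
      (by rw [hz, hz', Sum.inr.inj (e.injective h)])

lemma isLeft_iterate_sumCancelStep_card [Finite Z] (s : S) :
    (e.sumCancelStep^[Nat.card Z] (e (.inl s))).isLeft := by
  by_contra hN
  have hright : ∀ k ≤ Nat.card Z, (e.sumCancelStep^[k] (e (.inl s))).isRight := by
    intro k hk
    by_contra hk'
    obtain ⟨t, ht⟩ := Sum.isLeft_iff.mp (Sum.not_isRight.mp hk')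
    exact hN (by rw [e.iterate_sumCancelStep_eq_inl_of_le ht hk, Sum.isLeft_inl])
  let ζ : Fin (Nat.card Z + 1) → Z := fun k =>
    (e.sumCancelStep^[k] (e (.inl s))).getRight (hright k (Nat.lt_succ_iff.mp k.2))
  have hζ : Injective ζ := by
    intro i j hij
    have hij' : e.sumCancelStep^[i] (e (.inl s)) = e.sumCancelStep^[j] (e (.inl s)) := by
      rw [← Sum.inr_getRight _ (hright i (Nat.lt_succ_iff.mp i.2)),
        ← Sum.inr_getRight _ (hright j (Nat.lt_succ_iff.mp j.2))]
      exact congrArg Sum.inr hij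
    by_contra hne
    rcases Nat.lt_or_gt_of_ne (Fin.val_ne_of_ne hne) with h | h
    · exact e.iterate_sumCancelStep_ne_of_lt s h (fun k hk => hright k (by omega)) hij'
    · exact e.iterate_sumCancelStep_ne_of_lt s h (fun k hk => hright k (by omega)) hij'.symm
  simpa using Nat.card_le_card_of_injective ζ hζ

lemma exists_iterate_sumCancelStep_symm_eq {n : ℕ} {q : S ⊕ Z} {t : T}
    (h : e.sumCancelStep^[n] (e q) = .inl t) :
    ∃ m ≤ n, e.symm.sumCancelStep^[m] (e.symm (.inl t)) = q := by
  induction n generalizing q with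
  | zero =>
    rw [iterate_zero_apply] at h
    exact ⟨0, le_rfl, by rw [iterate_zero_apply, ← h, symm_apply_apply]⟩
  | succ n ih =>
    rw [iterate_succ_apply] at h
    rcases hq : e q with t' | z
    · rw [hq, sumCancelStep_inl, iterate_fixed (e.sumCancelStep_inl t')] at h
      exact ⟨0, n.succ.zero_le, by rw [iterate_zero_apply, ← h, ← hq, symm_apply_apply]⟩
    · rw [hq, sumCancelStep_inr] at h
      obtain ⟨m, hm, hm'⟩ := ih h
      exact ⟨m + 1, by omega, by
        rw [iterate_succ_apply', hm', sumCancelStep_inr, ← hq, symm_apply_apply]⟩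

variable [Finite Z]

noncomputable def sumCancelFun (s : S) : T :=
  (e.sumCancelStep^[Nat.card Z] (e (.inl s))).getLeft (e.isLeft_iterate_sumCancelStep_card s)

lemma inl_sumCancelFun (s : S) :
    Sum.inl (e.sumCancelFun s) = e.sumCancelStep^[Nat.card Z] (e (.inl s)) :=
  Sum.inl_getLeft _ _

lemma sumCancelFun_symm_sumCancelFun (s : S) : e.symm.sumCancelFun (e.sumCancelFun s) = s := by
  obtain ⟨m, hm, hms⟩ := e.exists_iterate_sumCancelStep_symm_eq (e.inl_sumCancelFun s).symm
  apply Sum.inl_injective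
  rw [inl_sumCancelFun]
  exact e.symm.iterate_sumCancelStep_eq_inl_of_le hms hm

noncomputable def sumCancel : S ≃ T where
  toFun := e.sumCancelFun
  invFun := e.symm.sumCancelFun
  left_inv := e.sumCancelFun_symm_sumCancelFun
  right_inv := e.symm.sumCancelFun_symm_sumCancelFun

end Equiv

structure RightAction.Iso {X Y : Type*} (a : RightAction G X) (b : RightAction G Y) where
  toEquiv : X ≃ Y
  map_act : IsEquivMap a b toEquiv

namespace RightAction.Iso

variable {X Y Z X' Y' : Type u} {a : RightAction G X} {b : RightAction G Y} {c : RightAction G Z}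
  {a' : RightAction G X'} {b' : RightAction G Y'}

def refl (a : RightAction G X) : Iso a a := ⟨Equiv.refl X, fun _ _ => rfl⟩

def symm (e : Iso a b) : Iso b a where
  toEquiv := e.toEquiv.symm
  map_act y g := e.toEquiv.injective <| by
    rw [Equiv.apply_symm_apply, e.map_act, Equiv.apply_symm_apply]

def trans (e : Iso a b) (f : Iso b c) : Iso a c where
  toEquiv := e.toEquiv.trans f.toEquiv
  map_act x g := by rw [Equiv.trans_apply, Equiv.trans_apply, e.map_act, f.map_act]

def sumCongr (e : Iso a a') (f : Iso b b') : Iso (a.sum b) (a'.sum b') where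
  toEquiv := e.toEquiv.sumCongr f.toEquiv
  map_act
    | .inl x, g => congrArg Sum.inl (e.map_act x g)
    | .inr y, g => congrArg Sum.inr (f.map_act y g)

def sumAssoc (a : RightAction G X) (b : RightAction G Y) (c : RightAction G Z) :
    Iso ((a.sum b).sum c) (a.sum (b.sum c)) where
  toEquiv := Equiv.sumAssoc X Y Z
  map_act p g := by rcases p with (x | y) | z <;> rfl

lemma commute_sumCancelStep_act {e : X ⊕ Z ≃ Y ⊕ Z} (he : IsEquivMap (a.sum c) (b.sum c) e)
    (g : G) : Function.Commute e.sumCancelStep fun p => (b.sum c).act p g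
  | .inl _ => rfl
  | .inr z => he (.inr z) g

noncomputable def sumCancel [Finite Z] (e : Iso (a.sum c) (b.sum c)) : Iso a b where
  toEquiv := e.toEquiv.sumCancel
  map_act x g := Sum.inl_injective <| by
    change Sum.inl (e.toEquiv.sumCancelFun _) = (b.sum c).act (.inl (e.toEquiv.sumCancelFun x)) g
    rw [Equiv.inl_sumCancelFun, Equiv.inl_sumCancelFun,
      show Sum.inl (a.act x g) = (a.sum c).act (.inl x) g from rfl, e.map_act,
      ((commute_sumCancelStep_act e.map_act g).iterate_left _).eq]

end RightAction.Iso

namespace CategoryTheory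

abbrev IsoClasses (C : Type*) [Category C] := _root_.Quotient (isIsomorphicSetoid C)

variable {C : Type u₁} {D : Type u₂} {E : Type u₃} [Category.{v₁} C] [Category.{v₂} D]
  [Category.{v₃} E]

def Functor.mapIsoClasses (F : C ⥤ D) : IsoClasses C → IsoClasses D :=
  _root_.Quotient.map F.obj fun _ _ ⟨i⟩ => ⟨F.mapIso i⟩

lemma Functor.mapIsoClasses_id : (𝟭 C).mapIsoClasses = id :=
  funext <| _root_.Quotient.ind fun _ => rfl

lemma Functor.mapIsoClasses_comp (F : C ⥤ D) (F' : D ⥤ E) :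
    (F ⋙ F').mapIsoClasses = F'.mapIsoClasses ∘ F.mapIsoClasses :=
  funext <| _root_.Quotient.ind fun _ => rfl

def Equivalence.isoClassesEquiv (e : C ≌ D) : IsoClasses C ≃ IsoClasses D where
  toFun := e.functor.mapIsoClasses
  invFun := e.inverse.mapIsoClasses
  left_inv := _root_.Quotient.ind fun x => _root_.Quotient.sound ⟨(e.unitIso.app x).symm⟩
  right_inv := _root_.Quotient.ind fun y => _root_.Quotient.sound ⟨e.counitIso.app y⟩

lemma Sum.isIsomorphic_inl_iff {x y : C} :
    IsIsomorphic (Sum.inl x : C ⊕ D) (Sum.inl y) ↔ IsIsomorphic x y :=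
  ⟨fun ⟨i⟩ => ⟨⟨i.hom.down, i.inv.down, congrArg ULift.down i.hom_inv_id,
      congrArg ULift.down i.inv_hom_id⟩⟩,
    fun ⟨i⟩ => ⟨(Sum.inl_ C D).mapIso i⟩⟩

lemma Sum.isIsomorphic_inr_iff {x y : D} :
    IsIsomorphic (Sum.inr x : C ⊕ D) (Sum.inr y) ↔ IsIsomorphic x y :=
  ⟨fun ⟨i⟩ => ⟨⟨i.hom.down, i.inv.down, congrArg ULift.down i.hom_inv_id,
      congrArg ULift.down i.inv_hom_id⟩⟩,
    fun ⟨i⟩ => ⟨(Sum.inr_ C D).mapIso i⟩⟩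

def isoClassesSumEquiv : IsoClasses (C ⊕ D) ≃ IsoClasses C ⊕ IsoClasses D where
  toFun := _root_.Quotient.lift
    (Sum.elim (fun x => .inl (_root_.Quotient.mk _ x)) fun y => .inr (_root_.Quotient.mk _ y))
    (by
      rintro (x | x) (y | y) h
      · exact congrArg Sum.inl (_root_.Quotient.sound (Sum.isIsomorphic_inl_iff.mp h))
      · exact (hom_inl_inr_false _ _ h.some.hom).elim
      · exact (hom_inr_inl_false _ _ h.some.hom).elim
      · exact congrArg Sum.inr (_root_.Quotient.sound (Sum.isIsomorphic_inr_iff.mp h)))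
  invFun := Sum.elim (Sum.inl_ C D).mapIsoClasses (Sum.inr_ C D).mapIsoClasses
  left_inv := _root_.Quotient.ind <| by rintro (x | y) <;> rfl
  right_inv := by rintro (q | q) <;> induction q using _root_.Quotient.ind <;> rfl

def isoClassesDiscreteEquiv (X : Type*) : IsoClasses (Discrete X) ≃ X where
  toFun := _root_.Quotient.lift Discrete.as fun _ _ ⟨i⟩ => Discrete.eq_of_hom i.hom
  invFun x := _root_.Quotient.mk _ ⟨x⟩
  left_inv := _root_.Quotient.ind fun _ => rfl
  right_inv _ := rfl

end CategoryTheory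

namespace CatAction

variable {C : Type u} {D : Type u} [Category.{v} C] [Category.{v} D]

def isoClasses (ρ : CatAction G C) : RightAction G (IsoClasses C) where
  act q g := (ρ.ρ g).mapIsoClasses q
  act_one q := by rw [ρ.map_one, Functor.mapIsoClasses_id, id]
  act_mul q g h := by rw [ρ.map_mul, Functor.mapIsoClasses_comp, comp_apply]

def isoClassesIsoOfEquivalence {ρ : CatAction G C} {σ : CatAction G D} (e : C ≌ D)
    (he : IsEquivF ρ σ e.functor) : RightAction.Iso ρ.isoClasses σ.isoClasses where
  toEquiv := e.isoClassesEquiv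
  map_act q g := congrFun (show e.functor.mapIsoClasses ∘ (ρ.ρ g).mapIsoClasses =
      (σ.ρ g).mapIsoClasses ∘ e.functor.mapIsoClasses by
    rw [← Functor.mapIsoClasses_comp, he g, Functor.mapIsoClasses_comp]) q

def isoClassesSumIso (ρ : CatAction G C) (τ : CatAction G D) :
    RightAction.Iso (ρ.sum τ).isoClasses (ρ.isoClasses.sum τ.isoClasses) where
  toEquiv := isoClassesSumEquiv
  map_act := _root_.Quotient.ind <| by rintro (x | y) g <;> rfl

def isoClassesDiscreteIso {X : Type u} (a : RightAction G X) :
    RightAction.Iso (discAction a).isoClasses a where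
  toEquiv := isoClassesDiscreteEquiv X
  map_act := _root_.Quotient.ind fun _ _ => rfl

def isoClassesSumDiscreteIso {X Y E : Type u} [SmallCategory E] (a : RightAction G X)
    (b : RightAction G Y) (ρ : CatAction G E) :
    RightAction.Iso ((discAction a).sum ((discAction b).sum ρ)).isoClasses
      ((a.sum b).sum ρ.isoClasses) :=
  ((isoClassesSumIso _ _).trans ((isoClassesDiscreteIso a).sumCongr
    ((isoClassesSumIso _ _).trans ((isoClassesDiscreteIso b).sumCongr (.refl _))))).trans
    (RightAction.Iso.sumAssoc a b ρ.isoClasses).symm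

end CatAction

/-- Let `X, Y, A, B` be finite right `G`-sets and `ℰ` a finite categorified
`G`-set.  If `I(X) ⊎ I(B) ⊎ ℰ` is weakly equivalent to `I(A) ⊎ I(Y) ⊎ ℰ`, then the right
`G`-sets `X ⊎ B` and `A ⊎ Y` are isomorphic (there is an equivariant bijection). -/
theorem burnside_comparison_injective {G : Type w} [Group G]
    {X Y A B : Type u} [Finite X] [Finite Y] [Finite A] [Finite B]
    {E : Type u} [SmallCategory E] [Finite E] [∀ p q : E, Finite (p ⟶ q)]
    (aX : RightAction G X) (aY : RightAction G Y) (aA : RightAction G A)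
    (aB : RightAction G B) (ε : CatAction G E)
    (h : WeakEquivCat ((discAction aX).sum ((discAction aB).sum ε))
      ((discAction aA).sum ((discAction aY).sum ε))) :
    ∃ φ : X ⊕ B → A ⊕ Y, Function.Bijective φ ∧ IsEquivMap (aX.sum aB) (aA.sum aY) φ := by
  obtain ⟨F, P, hF, -, η, ε', -, -⟩ := h
  let φ := ((CatAction.isoClassesSumDiscreteIso aX aB ε).symm.trans
    ((CatAction.isoClassesIsoOfEquivalence (.mk F P η.symm ε') hF).trans
      (CatAction.isoClassesSumDiscreteIso aA aY ε))).sumCancel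
  exact ⟨φ.toEquiv, φ.toEquiv.bijective, φ.map_act⟩
end
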